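/- arXiv:2302.01625 — 2 statements merged into one kernel-verified Lean document; each statement's English description precedes it below -/
import Mathlib

section
/- Under the stated drift hypotheses, for all m, n ∈ ℕ, almost surely P(τ_{K,m} > n | 𝓕_m) ≤ e^{η(X_m − K)} · ρ^n. -/
open MeasureTheory Filter

/-!
Let `W n` be `exp (η (X (m + n) - K))` on the event that `X m, …, X (m + n)` all exceed `K`, and
`0` elsewhere. Then `1{τ m > n} ≤ W n` and `W 0 ≤ exp (η (X m - K))`. Comparing exponential
series termwise, `exp y - 1 - y ≤ (η / λ)² (exp (λ k) - 1 - λ k) = η² c` whenever `|y| ≤ η k`,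
so on the event `K ≤ X (m + n)` the drift condition gives
`E[exp (η (X (m + n + 1) - X (m + n))) | ℱ (m + n)] ≤ 1 - η ε + η² c ≤ ρ`.
Hence `E[W (n + 1) | ℱ (m + n)] ≤ ρ W n`, and the tower property yields `E[W n | ℱ m] ≤ ρ ^ n W 0`.
-/

namespace Real

lemma hasSum_exp_sub_one_sub (x : ℝ) :
    HasSum (fun n : ℕ => x ^ (n + 2) / (n + 2).factorial) (exp x - 1 - x) := by
  have h := (hasSum_nat_add_iff' 2).mpr
    (Real.exp_eq_exp_ℝ ▸ NormedSpace.expSeries_div_hasSum_exp (𝔸 := ℝ) x)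
  simpa [Finset.sum_range_succ, sub_sub] using h

lemma exp_sub_one_sub_le_sq_mul {y t x : ℝ} (ht0 : 0 ≤ t) (ht1 : t ≤ 1) (hx : 0 ≤ x)
    (hy : |y| ≤ t * x) : exp y - 1 - y ≤ t ^ 2 * (exp x - 1 - x) := by
  refine hasSum_le (fun n => ?_) (hasSum_exp_sub_one_sub y)
    ((hasSum_exp_sub_one_sub x).mul_left (t ^ 2))
  rw [← mul_div_assoc]
  gcongr
  calc y ^ (n + 2) ≤ |y| ^ (n + 2) := (le_abs_self _).trans (abs_pow y _).le
    _ ≤ (t * x) ^ (n + 2) := by gcongr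
    _ = t ^ n * (t ^ 2 * x ^ (n + 2)) := by ring
    _ ≤ t ^ 2 * x ^ (n + 2) := mul_le_of_le_one_left (by positivity) (pow_le_one₀ ht0 ht1)

lemma sq_div_two_le_exp_sub_one_sub_div_sq {lam k : ℝ} (hlam : 0 < lam) (hk : 0 ≤ k) :
    k ^ 2 / 2 ≤ (exp (lam * k) - 1 - lam * k) / lam ^ 2 := by
  rw [le_div_iff₀ (by positivity)]
  linarith [quadratic_le_exp_of_nonneg (mul_nonneg hlam.le hk)]

lemma exp_mul_le_one_add_mul_add_sq_mul {η lam k d : ℝ} (hη : 0 < η) (hηlam : η ≤ lam)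
    (hk : 0 ≤ k) (hd : |d| ≤ k) :
    exp (η * d) ≤ 1 + η * d + η ^ 2 * ((exp (lam * k) - 1 - lam * k) / lam ^ 2) := by
  have hlam : 0 < lam := hη.trans_le hηlam
  have key := exp_sub_one_sub_le_sq_mul (y := η * d) (t := η / lam) (x := lam * k)
    (by positivity) ((div_le_one hlam).mpr hηlam) (by positivity) (by
      rw [abs_mul, abs_of_pos hη, div_mul_eq_mul_div, mul_left_comm,
        mul_div_cancel_left₀ _ hlam.ne']
      exact mul_le_mul_of_nonneg_left hd hη.le)
  rw [div_pow, div_mul_eq_mul_div, mul_div_assoc] at key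
  linarith

end Real

section CondExp

variable {Ω : Type*} {m m0 : MeasurableSpace Ω} {μ : Measure Ω} [IsFiniteMeasure μ]

lemma integrable_exp_mul_of_abs_le {Δ : Ω → ℝ} (hΔ : AEStronglyMeasurable Δ μ) {η k : ℝ}
    (hη : 0 ≤ η) (hbdd : ∀ᵐ ω ∂μ, |Δ ω| ≤ k) : Integrable (fun ω => Real.exp (η * Δ ω)) μ :=
  .of_bound (Real.continuous_exp.comp_aestronglyMeasurable (hΔ.const_mul η)) (Real.exp (η * k))
    (hbdd.mono fun ω hω => by
      rw [Real.norm_of_nonneg (Real.exp_pos _).le, Real.exp_le_exp]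
      exact mul_le_mul_of_nonneg_left (le_of_abs_le hω) hη)

lemma condExp_exp_mul_le (hm : m ≤ m0) {Δ : Ω → ℝ} (hΔ : AEStronglyMeasurable Δ μ) {η lam k : ℝ}
    (hη : 0 < η) (hηlam : η ≤ lam) (hk : 0 ≤ k) (hbdd : ∀ᵐ ω ∂μ, |Δ ω| ≤ k) :
    μ[fun ω => Real.exp (η * Δ ω) | m] ≤ᵐ[μ] fun ω =>
      1 + η * μ[Δ | m] ω + η ^ 2 * ((Real.exp (lam * k) - 1 - lam * k) / lam ^ 2) := by
  set c := (Real.exp (lam * k) - 1 - lam * k) / lam ^ 2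
  have hΔint : Integrable Δ μ := .of_bound hΔ k (by simpa using hbdd)
  have haffine : μ[(fun _ => 1 + η ^ 2 * c) + η • Δ | m] =ᵐ[μ]
      fun ω => 1 + η * μ[Δ | m] ω + η ^ 2 * c := by
    filter_upwards [condExp_add (integrable_const _) (hΔint.smul η) m, condExp_smul η Δ m]
      with ω h_add h_smul
    rw [h_add, Pi.add_apply, h_smul, condExp_const hm]
    simp only [Pi.smul_apply, smul_eq_mul]
    ring
  refine (condExp_mono (integrable_exp_mul_of_abs_le hΔ hη.le hbdd)
    ((integrable_const _).add (hΔint.smul η)) ?_).trans haffine.le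
  filter_upwards [hbdd] with ω hω
  simp only [Pi.add_apply, Pi.smul_apply, smul_eq_mul]
  linarith [Real.exp_mul_le_one_add_mul_add_sq_mul hη hηlam hk hω]

end CondExp

section Iteration

variable {Ω : Type*} {m0 : MeasurableSpace Ω} {μ : Measure Ω} [IsFiniteMeasure μ]

lemma condExp_le_pow_smul_of_condExp_succ_le {ℱ : Filtration ℕ m0} {W : ℕ → Ω → ℝ} {ρ : ℝ}
    {m : ℕ} (hρ : 0 ≤ ρ) (hint : ∀ n, Integrable (W n) μ)
    (hstep : ∀ n, μ[W (n + 1) | ℱ (m + n)] ≤ᵐ[μ] ρ • W n) (n : ℕ) :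
    μ[W n | ℱ m] ≤ᵐ[μ] ρ ^ n • μ[W 0 | ℱ m] := by
  induction n with
  | zero => rw [pow_zero, one_smul]
  | succ n ih =>
    have htower : μ[μ[W (n + 1) | ℱ (m + n)] | ℱ m] =ᵐ[μ] μ[W (n + 1) | ℱ m] :=
      condExp_condExp_of_le (ℱ.mono (Nat.le_add_right m n)) (ℱ.le (m + n))
    filter_upwards [htower, condExp_mono integrable_condExp ((hint n).smul ρ) (hstep n),
      condExp_smul ρ (W n) (ℱ m), ih] with ω h_tower h_step h_smul h_ih
    simp only [Pi.smul_apply, smul_eq_mul] at h_step h_smul h_ih ⊢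
    calc μ[W (n + 1) | ℱ m] ω = μ[μ[W (n + 1) | ℱ (m + n)] | ℱ m] ω := h_tower.symm
      _ ≤ ρ * μ[W n | ℱ m] ω := h_step.trans h_smul.le
      _ ≤ ρ * (ρ ^ n * μ[W 0 | ℱ m] ω) := mul_le_mul_of_nonneg_left h_ih hρ
      _ = ρ ^ (n + 1) * μ[W 0 | ℱ m] ω := by ring

end Iteration

lemma ENat.natCast_lt_sInf_image_natCast_iff {S : Set ℕ} {n : ℕ} :
    (n : ℕ∞) < sInf ((fun j : ℕ => (j : ℕ∞)) '' S) ↔ ∀ j ∈ S, n < j := by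
  rw [← ENat.add_one_le_iff (ENat.natCast_ne_top n), le_sInf_iff, Set.forall_mem_image]
  exact forall₂_congr fun j _ => by norm_cast

section Survival

variable {Ω : Type*} {m0 : MeasurableSpace Ω} {μ : Measure Ω}

def survives (X : ℕ → Ω → ℝ) (K : ℝ) (m n : ℕ) : Set Ω :=
  {ω | ∀ j ≤ n, K < X (m + j) ω}

noncomputable def expPotential (X : ℕ → Ω → ℝ) (K η : ℝ) (m n : ℕ) : Ω → ℝ :=
  (survives X K m n).indicator fun ω => Real.exp (η * (X (m + n) ω - K))

variable {ℱ : Filtration ℕ m0} {X : ℕ → Ω → ℝ} {K η : ℝ} {m n : ℕ}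

lemma measurableSet_survives (hadp : Adapted ℱ X) :
    MeasurableSet[ℱ (m + n)] (survives X K m n) := by
  have : survives X K m n = ⋂ j ≤ n, {ω | K < X (m + j) ω} := by
    ext ω; simp [survives]
  rw [this]
  refine .biInter (Set.to_countable _) fun j hj => measurableSet_lt measurable_const ?_
  exact (hadp (m + j)).mono (ℱ.mono (Nat.add_le_add_left hj m)) le_rfl

lemma measurable_expPotential (hadp : Adapted ℱ X) :
    Measurable[ℱ (m + n)] (expPotential X K η m n) :=
  (Real.measurable_exp.comp (((hadp (m + n)).sub_const K).const_mul η)).indicator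
    (measurableSet_survives hadp)

lemma expPotential_nonneg (ω : Ω) : 0 ≤ expPotential X K η m n ω :=
  Set.indicator_nonneg (fun _ _ => (Real.exp_pos _).le) ω

lemma expPotential_zero_le (ω : Ω) : expPotential X K η m 0 ω ≤ Real.exp (η * (X m ω - K)) :=
  Set.indicator_le_self' (fun _ _ => (Real.exp_pos _).le) ω

lemma indicator_survives_le_expPotential (hη : 0 ≤ η) (ω : Ω) :
    (survives X K m n).indicator (fun _ => (1 : ℝ)) ω ≤ expPotential X K η m n ω := by
  unfold expPotential
  by_cases hω : ω ∈ survives X K m n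
  · rw [Set.indicator_of_mem hω, Set.indicator_of_mem hω]
    exact Real.one_le_exp (mul_nonneg hη (sub_nonneg.mpr (hω n le_rfl).le))
  · rw [Set.indicator_of_notMem hω, Set.indicator_of_notMem hω]

lemma expPotential_succ_le (ω : Ω) :
    expPotential X K η m (n + 1) ω ≤
      expPotential X K η m n ω * Real.exp (η * (X (m + n + 1) ω - X (m + n) ω)) := by
  unfold expPotential
  by_cases hω : ω ∈ survives X K m (n + 1)
  · have hω' : ω ∈ survives X K m n := fun j hj => hω j (by omega)
    rw [Set.indicator_of_mem hω, Set.indicator_of_mem hω', ← Real.exp_add]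
    exact le_of_eq (by ring_nf)
  · rw [Set.indicator_of_notMem hω]
    exact mul_nonneg (expPotential_nonneg ω) (Real.exp_pos _).le

lemma setOf_natCast_lt_sInf_eq_survives :
    {ω | (n : ℕ∞) < sInf ((fun j : ℕ => (j : ℕ∞)) '' {j : ℕ | X (m + j) ω ≤ K})} =
      survives X K m n := by
  ext ω
  change (n : ℕ∞) < sInf _ ↔ ∀ j ≤ n, K < X (m + j) ω
  rw [ENat.natCast_lt_sInf_image_natCast_iff]
  exact forall_congr' fun j => by rw [← not_le, ← not_le (a := X (m + j) ω)]; exact imp_not_comm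

lemma ae_abs_sub_le_of_abs_increment_le {x0 k : ℝ} (hX0 : ∀ᵐ ω ∂μ, X 0 ω = x0)
    (hbdd : ∀ n : ℕ, ∀ᵐ ω ∂μ, |X (n + 1) ω - X n ω| ≤ k) (n : ℕ) :
    ∀ᵐ ω ∂μ, |X n ω - x0| ≤ n * k := by
  induction n with
  | zero => filter_upwards [hX0] with ω h; simp [h]
  | succ n ih =>
    filter_upwards [ih, hbdd n] with ω h_ih h_step
    push_cast
    linarith [abs_sub_le (X (n + 1) ω) (X n ω) x0]

lemma ae_norm_expPotential_le {x0 k : ℝ} (hη : 0 ≤ η) (hX0 : ∀ᵐ ω ∂μ, X 0 ω = x0)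
    (hbdd : ∀ n : ℕ, ∀ᵐ ω ∂μ, |X (n + 1) ω - X n ω| ≤ k) :
    ∀ᵐ ω ∂μ, ‖expPotential X K η m n ω‖ ≤ Real.exp (η * (x0 + (m + n) * k - K)) := by
  filter_upwards [ae_abs_sub_le_of_abs_increment_le hX0 hbdd (m + n)] with ω h
  rw [Real.norm_of_nonneg (expPotential_nonneg ω)]
  refine (Set.indicator_le_self' (fun _ _ => (Real.exp_pos _).le) ω).trans ?_
  push_cast at h
  exact Real.exp_le_exp.mpr (mul_le_mul_of_nonneg_left (by linarith [le_of_abs_le h]) hη)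

lemma integrable_expPotential [IsFiniteMeasure μ] {x0 k : ℝ} (hadp : Adapted ℱ X) (hη : 0 ≤ η)
    (hX0 : ∀ᵐ ω ∂μ, X 0 ω = x0) (hbdd : ∀ n : ℕ, ∀ᵐ ω ∂μ, |X (n + 1) ω - X n ω| ≤ k) :
    Integrable (expPotential X K η m n) μ :=
  .of_bound ((measurable_expPotential hadp).mono (ℱ.le _) le_rfl).aestronglyMeasurable _
    (ae_norm_expPotential_le hη hX0 hbdd)

lemma aestronglyMeasurable_increment (hadp : Adapted ℱ X) (n : ℕ) :
    AEStronglyMeasurable (fun ω => X (n + 1) ω - X n ω) μ := by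
  have hX : ∀ i, Measurable (X i) := fun i => (hadp i).mono (ℱ.le i) le_rfl
  exact ((hX (n + 1)).sub (hX n)).aestronglyMeasurable

lemma condExp_expPotential_succ_le [IsFiniteMeasure μ] {ρ x0 k : ℝ} (hadp : Adapted ℱ X)
    (hη : 0 ≤ η) (hX0 : ∀ᵐ ω ∂μ, X 0 ω = x0)
    (hbdd : ∀ n : ℕ, ∀ᵐ ω ∂μ, |X (n + 1) ω - X n ω| ≤ k)
    (hmgf : ∀ n : ℕ, ∀ᵐ ω ∂μ, K ≤ X n ω →
      μ[fun ω' => Real.exp (η * (X (n + 1) ω' - X n ω')) | ℱ n] ω ≤ ρ) (n : ℕ) :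
    μ[expPotential X K η m (n + 1) | ℱ (m + n)] ≤ᵐ[μ] ρ • expPotential X K η m n := by
  set W := expPotential X K η m n
  set G := fun ω => Real.exp (η * (X (m + n + 1) ω - X (m + n) ω))
  have hG : Integrable G μ :=
    integrable_exp_mul_of_abs_le (aestronglyMeasurable_increment hadp _) hη (hbdd (m + n))
  have hW_bound := ae_norm_expPotential_le (m := m) (n := n) (K := K) hη hX0 hbdd
  have hW_meas : StronglyMeasurable[ℱ (m + n)] W :=
    (measurable_expPotential hadp).stronglyMeasurable
  have hWG : Integrable (W * G) μ :=
    hG.bdd_mul (hW_meas.mono (ℱ.le _)).aestronglyMeasurable hW_bound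
  filter_upwards [condExp_mono (integrable_expPotential hadp hη hX0 hbdd) hWG
      (ae_of_all _ expPotential_succ_le),
    condExp_stronglyMeasurable_mul_of_bound (ℱ.le _) hW_meas hG _ hW_bound, hmgf (m + n)]
    with ω h_mono h_pull h_mgf
  rw [h_pull, Pi.mul_apply] at h_mono
  refine h_mono.trans ?_
  rw [Pi.smul_apply, smul_eq_mul, mul_comm ρ]
  by_cases hω : ω ∈ survives X K m n
  · exact mul_le_mul_of_nonneg_left (h_mgf (hω n le_rfl).le) (expPotential_nonneg ω)
  · simp [W, expPotential, Set.indicator_of_notMem hω]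

lemma condExp_exp_increment_le_of_drift [IsFiniteMeasure μ] {k ε lam : ℝ} (hadp : Adapted ℱ X)
    (hbdd : ∀ n : ℕ, ∀ᵐ ω ∂μ, |X (n + 1) ω - X n ω| ≤ k)
    (hdrift : ∀ n : ℕ, ∀ᵐ ω ∂μ, K ≤ X n ω →
      (μ[(fun ω' => X (n + 1) ω' - X n ω') | ℱ n]) ω ≤ -ε)
    (hk : 0 ≤ k) (hη : 0 < η) (hηlam : η ≤ lam)
    (hηc : η * (2 * ((Real.exp (lam * k) - 1 - lam * k) / lam ^ 2)) ≤ ε) (n : ℕ) :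
    ∀ᵐ ω ∂μ, K ≤ X n ω →
      μ[fun ω' => Real.exp (η * (X (n + 1) ω' - X n ω')) | ℱ n] ω ≤ 1 - η * ε / 2 := by
  filter_upwards [condExp_exp_mul_le (ℱ.le n) (aestronglyMeasurable_increment hadp n) hη hηlam hk
    (hbdd n), hdrift n] with ω h_mgf h_drift hK
  nlinarith [mul_le_mul_of_nonneg_left (h_drift hK) hη.le, mul_le_mul_of_nonneg_left hηc hη.le]

end Survival

lemma one_sub_mul_div_two_nonneg {η ε k c : ℝ} (hε : 0 < ε) (hεk : ε ≤ k) (hc : k ^ 2 / 2 ≤ c)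
    (hηc : η * (2 * c) < ε) : 0 ≤ 1 - η * ε / 2 := by
  nlinarith [mul_lt_mul_of_pos_right hηc hε, mul_le_mul hεk hεk hε.le (hε.le.trans hεk)]

theorem stmt_4_general
    {Ω : Type*} {m0 : MeasurableSpace Ω} {μ : Measure Ω} [IsProbabilityMeasure μ]
    (ℱ : Filtration ℕ m0) (X : ℕ → Ω → ℝ) (hadp : Adapted ℱ X)
    (x0 : ℝ) (hX0 : ∀ᵐ ω ∂μ, X 0 ω = x0)
    (k ε K : ℝ) (hk : 0 < k) (hε0 : 0 < ε) (hεk : ε ≤ k)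
    (hbdd : ∀ n : ℕ, ∀ᵐ ω ∂μ, |X (n + 1) ω - X n ω| ≤ k)
    (hdrift : ∀ n : ℕ, ∀ᵐ ω ∂μ, K ≤ X n ω →
      (μ[(fun ω' => X (n + 1) ω' - X n ω') | ℱ n]) ω ≤ -ε)
    (lam : ℝ) (hlam : 0 < lam)
    (c η ρ : ℝ)
    (hc : c = (Real.exp (lam * k) - 1 - lam * k) / lam ^ 2)
    (hη0 : 0 < η) (hηlt : η < min lam (ε / (2 * c)))
    (hρ : ρ = 1 - η * ε / 2)
    (τ : ℕ → Ω → ℕ∞)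
    (hτ : ∀ m ω, τ m ω = sInf ((fun n : ℕ => (n : ℕ∞)) '' {n : ℕ | X (m + n) ω ≤ K})) :
    ∀ m n : ℕ, ∀ᵐ ω ∂μ,
      (μ[Set.indicator {ω' | (n : ℕ∞) < τ m ω'} (fun _ => (1 : ℝ)) | ℱ m]) ω ≤
        Real.exp (η * (X m ω - K)) * ρ ^ n := by
  subst hc hρ
  intro m n
  obtain ⟨hηlam, hηc⟩ := lt_min_iff.mp hηlt
  have hc_lb := Real.sq_div_two_le_exp_sub_one_sub_div_sq hlam hk.le
  rw [lt_div_iff₀ (by nlinarith)] at hηc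
  have hρ0 := one_sub_mul_div_two_nonneg hε0 hεk hc_lb hηc
  have hmgf := condExp_exp_increment_le_of_drift hadp hbdd hdrift hk.le hη0 hηlam.le hηc.le
  have hint n := integrable_expPotential (m := m) (n := n) (K := K) hadp hη0.le hX0 hbdd
  have h0 : μ[expPotential X K η m 0 | ℱ m] = expPotential X K η m 0 :=
    condExp_of_stronglyMeasurable (ℱ.le m) (measurable_expPotential hadp).stronglyMeasurable
      (hint 0)
  simp_rw [hτ, setOf_natCast_lt_sInf_eq_survives]
  filter_upwards [condExp_mono ((integrable_const 1).indicator
      ((ℱ.le _) _ (measurableSet_survives hadp)))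
      (hint n) (ae_of_all _ (indicator_survives_le_expPotential hη0.le)),
    condExp_le_pow_smul_of_condExp_succ_le hρ0 hint
      (condExp_expPotential_succ_le hadp hη0.le hX0 hbdd hmgf) n] with ω h_ind h_iter
  rw [Pi.smul_apply, h0, smul_eq_mul] at h_iter
  calc _ ≤ _ := h_ind
    _ ≤ _ := h_iter
    _ ≤ _ := by
      rw [mul_comm (_ ^ n)]
      exact mul_le_mul_of_nonneg_right (expPotential_zero_le ω) (pow_nonneg hρ0 n)

theorem stmt_4
    {Ω : Type*} {m0 : MeasurableSpace Ω} {μ : Measure Ω} [IsProbabilityMeasure μ]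
    (ℱ : Filtration ℕ m0) (X : ℕ → Ω → ℝ) (hadp : Adapted ℱ X)
    (x0 : ℝ) (hX0 : ∀ᵐ ω ∂μ, X 0 ω = x0)
    (k ε K : ℝ) (hk : 0 < k) (hε0 : 0 < ε) (hεk : ε ≤ k)
    (hbdd : ∀ n : ℕ, ∀ᵐ ω ∂μ, |X (n + 1) ω - X n ω| ≤ k)
    (hdrift : ∀ n : ℕ, ∀ᵐ ω ∂μ, K ≤ X n ω →
      (μ[(fun ω' => X (n + 1) ω' - X n ω') | ℱ n]) ω ≤ -ε)
    (lam : ℝ) (hlam : 0 < lam)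
    (c η ρ D : ℝ)
    (hc : c = (Real.exp (lam * k) - 1 - lam * k) / lam ^ 2)
    (hη0 : 0 < η) (hηlt : η < min lam (ε / (2 * c)))
    (hρ : ρ = 1 - η * ε / 2)
    (hD : D = Real.exp (lam * k))
    (τ : ℕ → Ω → ℕ∞)
    (hτ : ∀ m ω, τ m ω = sInf ((fun n : ℕ => (n : ℕ∞)) '' {n : ℕ | X (m + n) ω ≤ K})) :
    ∀ m n : ℕ, ∀ᵐ ω ∂μ,
      (μ[Set.indicator {ω' | (n : ℕ∞) < τ m ω'} (fun _ => (1 : ℝ)) | ℱ m]) ω ≤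
        Real.exp (η * (X m ω - K)) * ρ ^ n :=
  stmt_4_general ℱ X hadp x0 hX0 k ε K hk hε0 hεk hbdd hdrift lam hlam c η ρ hc hη0 hηlt hρ τ hτ
end

section
/- Occupation-time bound: under the stated drift hypotheses, let M ∈ ℝ be such that p₀(M) := 1 − (D e^{η(K − M)})/(1 − ρ) > 0. Then for every ε' > 0 there exist a constant C < ∞ and γ ∈ (0,1) such that for all n ≥ 1, P( (1/n) Σ_{j=1}^{n} 𝟙{X_j < M} ≤ p₀(M)(1 − ε') ) ≤ C γ^n. -/
/-!
Bounded increments and negative drift above `K` make `V = exp (η (X - M))` satisfy the geometric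
drift condition `E[V_{n+1} | ℱ_n] ≤ ρ V_n + b` with `b / (1 - ρ) ≤ 1 - p₀` (Hajek). The event in
question says that the time `T_n` spent by `X` in `[M, ∞)`, i.e. by `V` in `[1, ∞)`, is at least
`t n` with `t = 1 - p₀ (1 - ε') > b / (1 - ρ)`. Pick `t'` in between; to first order in `θ` at `0`
there are `θ, α > 0` for which the tilted functional `exp (θ T_n) (V_n + α)` grows in expectation
at most like `exp (θ t' n)`, and Markov's inequality gives the rate `γ = exp (θ (t' - t)) < 1`.
-/

open MeasureTheory Filter Real Topology

namespace Real

theorem exp_sub_one_sub_eq_tsum (x : ℝ) :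
    exp x - 1 - x = ∑' n : ℕ, x ^ (n + 2) / (n + 2).factorial := by
  rw [exp_eq_exp_ℝ, NormedSpace.exp_eq_tsum_div]
  beta_reduce
  rw [← (summable_pow_div_factorial x).sum_add_tsum_nat_add 2]
  simp [Finset.sum_range_succ]
  ring

/-- The function `x ↦ (exp x - 1 - x) / x ^ 2` is monotone on `[0, ∞)`. -/
theorem exp_mul_sub_one_sub_le {r z : ℝ} (hr0 : 0 ≤ r) (hr1 : r ≤ 1) (hz : 0 ≤ z) :
    exp (r * z) - 1 - r * z ≤ r ^ 2 * (exp z - 1 - z) := by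
  have hsum (x : ℝ) : Summable fun n : ℕ => x ^ (n + 2) / (n + 2).factorial :=
    (summable_nat_add_iff 2).2 (summable_pow_div_factorial x)
  rw [exp_sub_one_sub_eq_tsum, exp_sub_one_sub_eq_tsum, ← tsum_mul_left]
  refine (hsum _).tsum_le_tsum (fun n => ?_) ((hsum z).mul_left _)
  rw [mul_div_assoc', mul_pow, pow_add r]
  gcongr
  exact mul_le_of_le_one_left (by positivity) (pow_le_one₀ hr0 hr1)

theorem exp_sub_le_of_abs_le {y a : ℝ} (h : |y| ≤ a) : exp y - y ≤ exp a - a := by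
  have hmono {p q : ℝ} (hp : 0 ≤ p) (hpq : p ≤ q) : exp p - p ≤ exp q - q := by
    have : exp p * (q - p + 1) ≤ exp q := by
      rw [← sub_add_cancel q p, exp_add, add_sub_cancel_right, mul_comm]
      gcongr; exact add_one_le_exp _
    nlinarith [one_le_exp hp]
  rcases le_total 0 y with hy | hy
  · exact hmono hy (le_of_abs_le h)
  · -- `exp y - y ≤ exp (-y) + y` because `2 * (-y) ≤ 2 * sinh (-y)`
    have hsinh : -y ≤ sinh (-y) := self_le_sinh_iff.2 (neg_nonneg.2 hy)
    rw [sinh_eq, neg_neg] at hsinh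
    have := hmono (neg_nonneg.2 hy) ((neg_le_abs y).trans h)
    linarith

end Real

section Constants

variable {k ε lam c η : ℝ}

theorem exp_mul_sub_one_sub_le_half_mul (hk : 0 ≤ k) (hη : 0 < η) (hηlam : η < lam)
    (hc : c = (exp (lam * k) - 1 - lam * k) / lam ^ 2) (hηc : η < ε / (2 * c)) :
    exp (η * k) - 1 - η * k ≤ η * ε / 2 := by
  have hlam : 0 < lam := hη.trans hηlam
  have hc0 : 0 < c := by
    refine (hc ▸ div_nonneg (by linarith [add_one_le_exp (lam * k)]) (sq_nonneg _)).lt_of_ne ?_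
    rintro rfl
    simp only [mul_zero, div_zero] at hηc
    exact hη.not_gt hηc
  have hηc' : η * (2 * c) < ε := (lt_div_iff₀ (by positivity)).1 hηc
  have hscale : η * k = η / lam * (lam * k) := by field_simp
  calc exp (η * k) - 1 - η * k
      ≤ (η / lam) ^ 2 * (exp (lam * k) - 1 - lam * k) := by
        rw [hscale]
        exact exp_mul_sub_one_sub_le (by positivity) ((div_le_one hlam).2 hηlam.le) (by positivity)
    _ = η * (η * c) := by rw [hc]; field_simp
    _ ≤ η * ε / 2 := by nlinarith

theorem mul_lt_one_of_lt_div_two_mul (hε : 0 < ε) (hεk : ε ≤ k) (hlam : 0 < lam)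
    (hc : c = (exp (lam * k) - 1 - lam * k) / lam ^ 2) (hηc : η < ε / (2 * c)) :
    η * ε < 1 := by
  have hk : 0 < k := hε.trans_le hεk
  have hck : k ^ 2 ≤ 2 * c := by
    have := quadratic_le_exp_of_nonneg (mul_nonneg hlam.le hk.le)
    rw [hc, mul_div_assoc', le_div_iff₀ (by positivity)]
    nlinarith
  have hηc' : η * (2 * c) < ε := (lt_div_iff₀ (by nlinarith)).1 hηc
  nlinarith

end Constants

theorem exists_pos_exp_sub_one_mul_lt {ρ b t : ℝ} (hb : 0 ≤ b) (ht : 0 < t)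
    (hbt : b < (1 - ρ) * t) :
    ∃ θ > 0, (exp θ - 1) * exp (θ * t) * b < (exp (θ * t) - ρ * exp θ) * (exp (θ * t) - 1) := by
  -- Both sides vanish at `θ = 0`, with slopes `b < (1 - ρ) * t`.
  have hnear : ∀ᶠ θ in 𝓝 (0 : ℝ), exp (θ * (1 + t)) * b < (1 - ρ * exp θ) * t :=
    ContinuousAt.eventually_lt (by fun_prop) (by fun_prop) (by simpa using hbt)
  obtain ⟨θ, hθ, hθ0⟩ :=
    ((hnear.filter_mono (nhdsWithin_le_nhds (s := Set.Ioi 0))).and self_mem_nhdsWithin).exists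
  refine ⟨θ, hθ0, ?_⟩
  have hexp_sub_one : exp θ - 1 ≤ θ * exp θ := by
    have := mul_le_mul_of_nonneg_left (one_sub_le_exp_neg θ) (exp_pos θ).le
    rw [exp_neg, mul_inv_cancel₀ (exp_pos θ).ne'] at this
    linarith
  have hρθ : 0 < 1 - ρ * exp θ :=
    pos_of_mul_pos_left ((by positivity : (0 : ℝ) ≤ _).trans_lt hθ) ht.le
  calc (exp θ - 1) * exp (θ * t) * b ≤ θ * (exp (θ * (1 + t)) * b) := by
        rw [mul_add, mul_one, exp_add]
        have := mul_le_mul_of_nonneg_right hexp_sub_one (mul_nonneg (exp_pos (θ * t)).le hb)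
        linarith
    _ < θ * ((1 - ρ * exp θ) * t) := mul_lt_mul_of_pos_left hθ hθ0
    _ = (1 - ρ * exp θ) * (θ * t) := by ring
    _ ≤ (exp (θ * t) - ρ * exp θ) * (exp (θ * t) - 1) := by
        have hone : 1 ≤ exp (θ * t) := one_le_exp (by positivity)
        gcongr <;> linarith [add_one_le_exp (θ * t)]

section Drift

variable {Ω : Type*} {m m0 : MeasurableSpace Ω} {μ : Measure Ω} [IsFiniteMeasure μ]

theorem condExp_const_mul_add_const (hm : m ≤ m0) {g : Ω → ℝ} (hg : Integrable g μ) (a c : ℝ) :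
    μ[fun ω => a * g ω + c|m] =ᵐ[μ] fun ω => a * μ[g|m] ω + c := by
  have hsplit : (fun ω => a * g ω + c) = a • g + fun _ => c := rfl
  rw [hsplit]
  filter_upwards [condExp_add (hg.smul a) (integrable_const c) m, condExp_smul a g m] with ω h1 h2
  rw [h1, Pi.add_apply, h2, condExp_const hm]
  rfl

theorem condExp_exp_add_le (hm : m ≤ m0) {Z Δ : Ω → ℝ} {k ε K η ρ : ℝ}
    (hZ : StronglyMeasurable[m] Z) (hΔm : AEStronglyMeasurable Δ μ) (hΔ : ∀ᵐ ω ∂μ, |Δ ω| ≤ k)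
    (hdrift : ∀ᵐ ω ∂μ, K ≤ Z ω → μ[Δ|m] ω ≤ -ε)
    (hint : Integrable (fun ω => exp (η * (Z ω + Δ ω))) μ) (hη : 0 ≤ η) (hρ0 : 0 ≤ ρ)
    (hρ : 1 - η * ε + (exp (η * k) - 1 - η * k) ≤ ρ) :
    μ[fun ω => exp (η * (Z ω + Δ ω))|m] ≤ᵐ[μ]
      fun ω => ρ * exp (η * Z ω) + exp (η * (K + k)) := by
  have hΔint : Integrable Δ μ := .of_bound hΔm k (by simpa only [norm_eq_abs] using hΔ)
  have hηΔ : ∀ᵐ ω ∂μ, |η * Δ ω| ≤ η * k := by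
    filter_upwards [hΔ] with ω h
    rw [abs_mul, abs_of_nonneg hη]
    exact mul_le_mul_of_nonneg_left h hη
  have hexpΔ_le : ∀ᵐ ω ∂μ, exp (η * Δ ω) ≤ exp (η * k) := by
    filter_upwards [hηΔ] with ω h
    exact exp_le_exp.2 (le_of_abs_le h)
  have hexpΔ_int : Integrable (fun ω => exp (η * Δ ω)) μ :=
    .of_bound (continuous_exp.comp_aestronglyMeasurable (hΔm.const_mul η)) (exp (η * k)) (by
      filter_upwards [hexpΔ_le] with ω h
      rwa [norm_of_nonneg (exp_pos _).le])
  have hE_drift : μ[fun ω => exp (η * Δ ω)|m] ≤ᵐ[μ]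
      fun ω => η * μ[Δ|m] ω + (1 + (exp (η * k) - 1 - η * k)) := by
    have hmono := condExp_mono (m := m) hexpΔ_int (hΔint.const_mul η |>.add (integrable_const
      (1 + (exp (η * k) - 1 - η * k)))) (by
        filter_upwards [hηΔ] with ω h
        show exp (η * Δ ω) ≤ η * Δ ω + _
        linarith [exp_sub_le_of_abs_le h])
    filter_upwards [hmono, condExp_const_mul_add_const hm hΔint η (1 + (exp (η * k) - 1 - η * k))]
      with ω h1 h2
    exact h1.trans_eq h2
  have hE_bdd : μ[fun ω => exp (η * Δ ω)|m] ≤ᵐ[μ] fun _ => exp (η * k) := by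
    simpa only [condExp_const hm] using
      condExp_mono (m := m) hexpΔ_int (integrable_const (exp (η * k))) hexpΔ_le
  have hpull : μ[fun ω => exp (η * (Z ω + Δ ω))|m] =ᵐ[μ]
      fun ω => exp (η * Z ω) * μ[fun ω => exp (η * Δ ω)|m] ω := by
    simp only [mul_add, exp_add] at hint ⊢
    exact condExp_mul_of_stronglyMeasurable_left (f := fun ω => exp (η * Z ω))
      (continuous_exp.comp_stronglyMeasurable (hZ.const_mul η)) hint hexpΔ_int
  filter_upwards [hpull, hE_drift, hE_bdd, hdrift,
    condExp_nonneg (m := m) (Eventually.of_forall fun ω => (exp_pos (η * Δ ω)).le)]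
    with ω hpull hE_drift hE_bdd hdrift hE_nonneg
  rw [hpull]
  rcases le_or_gt K (Z ω) with hK | hK
  · have : μ[fun ω => exp (η * Δ ω)|m] ω ≤ ρ := by nlinarith [hdrift hK]
    nlinarith [exp_pos (η * Z ω), exp_pos (η * (K + k))]
  · calc exp (η * Z ω) * μ[fun ω => exp (η * Δ ω)|m] ω ≤ exp (η * K) * exp (η * k) := by
          gcongr
      _ ≤ ρ * exp (η * Z ω) + exp (η * (K + k)) := by
          rw [← exp_add, ← mul_add]
          linarith [mul_nonneg hρ0 (exp_pos (η * Z ω)).le]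

end Drift

section Occupation

variable {Ω : Type*} {m0 : MeasurableSpace Ω}

noncomputable def occupationTime (V : ℕ → Ω → ℝ) (n : ℕ) (ω : Ω) : ℝ :=
  ∑ j ∈ Finset.Icc 1 n, if 1 ≤ V j ω then 1 else 0

variable {V : ℕ → Ω → ℝ}

@[simp]
theorem occupationTime_zero (ω : Ω) : occupationTime V 0 ω = 0 := by
  simp [occupationTime]

theorem occupationTime_succ (n : ℕ) (ω : Ω) :
    occupationTime V (n + 1) ω = occupationTime V n ω + if 1 ≤ V (n + 1) ω then 1 else 0 :=
  Finset.sum_Icc_succ_top (by omega) _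

theorem occupationTime_le (n : ℕ) (ω : Ω) : occupationTime V n ω ≤ n := by
  calc occupationTime V n ω ≤ ∑ _j ∈ Finset.Icc 1 n, (1 : ℝ) :=
        Finset.sum_le_sum fun _ _ => by split_ifs <;> norm_num
    _ = n := by simp

theorem measurable_occupationTime {ℱ : Filtration ℕ m0} (hV : Adapted ℱ V) (n : ℕ) :
    Measurable[ℱ n] (occupationTime V n) := by
  refine Finset.measurable_sum _ fun j hj => ?_
  have hVj : Measurable[ℱ n] (V j) :=
    (hV j).mono (ℱ.mono (Finset.mem_Icc.1 hj).2) le_rfl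
  exact Measurable.ite (measurableSet_le measurable_const hVj) measurable_const measurable_const

theorem exp_mul_ite_mul_add_le {θ α σ v : ℝ} (hv : 0 ≤ v) (hθ : 0 ≤ θ) (hα : 0 ≤ α)
    (hσ : exp θ * (1 + α) ≤ σ + α) :
    exp (θ * if 1 ≤ v then 1 else 0) * (v + α) ≤ σ * v + α := by
  have hθ1 : 1 ≤ exp θ := one_le_exp hθ
  split_ifs with h
  · rw [mul_one]
    nlinarith [mul_nonneg (mul_nonneg hα (sub_nonneg.2 hθ1)) (sub_nonneg.2 h)]
  · rw [mul_zero, exp_zero, one_mul]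
    have hσ1 : 1 ≤ σ := by nlinarith
    nlinarith

end Occupation

section Tilted

variable {Ω : Type*} {m0 : MeasurableSpace Ω} {μ : Measure Ω}
  {ℱ : Filtration ℕ m0} {V : ℕ → Ω → ℝ} {ρ b θ α σ β : ℝ}

structure GeometricDrift (ℱ : Filtration ℕ m0) (μ : Measure Ω) (V : ℕ → Ω → ℝ) (ρ b : ℝ) :
    Prop where
  adapted : Adapted ℱ V
  nonneg : ∀ n ω, 0 ≤ V n ω
  integrable : ∀ n, Integrable (V n) μ
  condExp_succ_le : ∀ n, μ[V (n + 1)|ℱ n] ≤ᵐ[μ] fun ω => ρ * V n ω + b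

theorem integrable_exp_occupationTime_mul (hV : Adapted ℱ V) {f : Ω → ℝ} (hf : Integrable f μ)
    (hθ : 0 ≤ θ) (n : ℕ) :
    Integrable (fun ω => exp (θ * occupationTime V n ω) * f ω) μ := by
  refine hf.bdd_mul (c := exp (θ * n)) ?_ (Eventually.of_forall fun ω => ?_)
  · exact (continuous_exp.comp_stronglyMeasurable
      (((measurable_occupationTime hV n).mono (ℱ.le n) le_rfl).stronglyMeasurable.const_mul
        θ)).aestronglyMeasurable
  · rw [norm_of_nonneg (exp_pos _).le]
    exact exp_le_exp.2 (mul_le_mul_of_nonneg_left (occupationTime_le n ω) hθ)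

variable [IsFiniteMeasure μ]

theorem GeometricDrift.condExp_exp_occupationTime_mul_le (hV : GeometricDrift ℱ μ V ρ b)
    (hθ : 0 ≤ θ) (hα : 0 ≤ α) (hσ : exp θ * (1 + α) ≤ σ + α) (hσβ : σ * ρ ≤ β)
    (hb : σ * b + α ≤ β * α) (n : ℕ) :
    μ[fun ω => exp (θ * occupationTime V (n + 1) ω) * (V (n + 1) ω + α)|ℱ n] ≤ᵐ[μ]
      fun ω => β * (exp (θ * occupationTime V n ω) * (V n ω + α)) := by
  have hσ1 : 1 ≤ σ := by nlinarith [one_le_exp hθ]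
  have hF : StronglyMeasurable[ℱ n] fun ω => exp (θ * occupationTime V n ω) :=
    continuous_exp.comp_stronglyMeasurable
      ((measurable_occupationTime hV.adapted n).stronglyMeasurable.const_mul θ)
  have hF_bdd : ∀ᵐ ω ∂μ, ‖exp (θ * occupationTime V n ω)‖ ≤ exp (θ * n) :=
    Eventually.of_forall fun ω => by
      rw [norm_of_nonneg (exp_pos _).le]
      exact exp_le_exp.2 (mul_le_mul_of_nonneg_left (occupationTime_le n ω) hθ)
  have hnext_int : Integrable (fun ω => σ * V (n + 1) ω + α) μ :=
    ((hV.integrable (n + 1)).const_mul σ).add (integrable_const α)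
  have hstep : (fun ω => exp (θ * occupationTime V (n + 1) ω) * (V (n + 1) ω + α)) ≤
      fun ω => exp (θ * occupationTime V n ω) * (σ * V (n + 1) ω + α) := fun ω => by
    dsimp only
    rw [occupationTime_succ, mul_add θ, exp_add, mul_assoc]
    exact mul_le_mul_of_nonneg_left (exp_mul_ite_mul_add_le (hV.nonneg _ ω) hθ hα hσ)
      (exp_pos _).le
  have hmono := condExp_mono (m := ℱ n)
    (integrable_exp_occupationTime_mul hV.adapted
      ((hV.integrable (n + 1)).add (integrable_const α)) hθ (n + 1))
    (integrable_exp_occupationTime_mul hV.adapted hnext_int hθ n) (Eventually.of_forall hstep)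
  filter_upwards [hmono, condExp_stronglyMeasurable_mul_of_bound (ℱ.le n) hF hnext_int _ hF_bdd,
    condExp_const_mul_add_const (ℱ.le n) (hV.integrable (n + 1)) σ α, hV.condExp_succ_le n]
    with ω h1 h2 h3 h4
  refine (h1.trans_eq h2).trans ?_
  rw [Pi.mul_apply, h3]
  calc exp (θ * occupationTime V n ω) * (σ * μ[V (n + 1)|ℱ n] ω + α)
      ≤ exp (θ * occupationTime V n ω) * (σ * (ρ * V n ω + b) + α) := by gcongr
    _ ≤ exp (θ * occupationTime V n ω) * (β * (V n ω + α)) := by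
        gcongr
        nlinarith [mul_le_mul_of_nonneg_right hσβ (hV.nonneg n ω)]
    _ = β * (exp (θ * occupationTime V n ω) * (V n ω + α)) := by ring

theorem GeometricDrift.integral_exp_occupationTime_mul_le (hV : GeometricDrift ℱ μ V ρ b)
    (hθ : 0 ≤ θ) (hα : 0 ≤ α) (hσ : exp θ * (1 + α) ≤ σ + α) (hσβ : σ * ρ ≤ β)
    (hb : σ * b + α ≤ β * α) (hβ : 0 ≤ β) (n : ℕ) :
    ∫ ω, exp (θ * occupationTime V n ω) * (V n ω + α) ∂μ ≤ β ^ n * ∫ ω, (V 0 ω + α) ∂μ := by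
  induction n with
  | zero => simp
  | succ n ih =>
    calc ∫ ω, exp (θ * occupationTime V (n + 1) ω) * (V (n + 1) ω + α) ∂μ
        = ∫ ω, μ[fun ω => exp (θ * occupationTime V (n + 1) ω) * (V (n + 1) ω + α)|ℱ n] ω ∂μ :=
          (integral_condExp (ℱ.le n)).symm
      _ ≤ ∫ ω, β * (exp (θ * occupationTime V n ω) * (V n ω + α)) ∂μ :=
          integral_mono_ae integrable_condExp
            ((integrable_exp_occupationTime_mul hV.adapted
              ((hV.integrable n).add (integrable_const α)) hθ n).const_mul β)
            (hV.condExp_exp_occupationTime_mul_le hθ hα hσ hσβ hb n)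
      _ ≤ β ^ (n + 1) * ∫ ω, (V 0 ω + α) ∂μ := by
          rw [integral_const_mul, pow_succ', mul_assoc]
          gcongr

theorem GeometricDrift.measureReal_occupationTime_ge_le (hV : GeometricDrift ℱ μ V ρ b)
    (hθ : 0 ≤ θ) (hα : 0 < α) (hσ : exp θ * (1 + α) ≤ σ + α) (hσβ : σ * ρ ≤ β)
    (hb : σ * b + α ≤ β * α) (hβ : 0 ≤ β) (t : ℝ) (n : ℕ) :
    μ.real {ω | t * n ≤ occupationTime V n ω} ≤
      (∫ ω, (V 0 ω + α) ∂μ) / α * (β * exp (-(θ * t))) ^ n := by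
  have hmarkov := mul_meas_ge_le_integral_of_nonneg (μ := μ)
    (f := fun ω => exp (θ * occupationTime V n ω) * (V n ω + α))
    (Eventually.of_forall fun ω => mul_nonneg (exp_pos _).le (add_nonneg (hV.nonneg n ω) hα.le))
    (integrable_exp_occupationTime_mul hV.adapted
      ((hV.integrable n).add (integrable_const α)) hθ n) (exp (θ * (t * n)) * α)
  have hsub : {ω | t * n ≤ occupationTime V n ω} ⊆
      {ω | exp (θ * (t * n)) * α ≤ exp (θ * occupationTime V n ω) * (V n ω + α)} :=
    Set.ofPred_subset_ofPred.2 fun ω hω => by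
      gcongr
      linarith [hV.nonneg n ω]
  calc μ.real {ω | t * n ≤ occupationTime V n ω}
      ≤ (∫ ω, exp (θ * occupationTime V n ω) * (V n ω + α) ∂μ) / (exp (θ * (t * n)) * α) :=
        (measureReal_mono hsub).trans ((le_div_iff₀' (by positivity)).2 hmarkov)
    _ ≤ (β ^ n * ∫ ω, (V 0 ω + α) ∂μ) / (exp (θ * (t * n)) * α) := by
        gcongr
        exact hV.integral_exp_occupationTime_mul_le hθ hα.le hσ hσβ hb hβ n
    _ = (∫ ω, (V 0 ω + α) ∂μ) / α * (β * exp (-(θ * t))) ^ n := by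
        rw [mul_pow, ← exp_nat_mul, show (n : ℝ) * -(θ * t) = -(θ * (t * n)) by ring, exp_neg]
        field_simp

theorem GeometricDrift.exists_measureReal_occupationTime_ge_le (hV : GeometricDrift ℱ μ V ρ b)
    (hρ0 : 0 < ρ) (hρ1 : ρ < 1) (hb : 0 ≤ b) {t : ℝ} (ht : b < (1 - ρ) * t) :
    ∃ C γ : ℝ, 0 < γ ∧ γ < 1 ∧
      ∀ n : ℕ, μ.real {ω | t * n ≤ occupationTime V n ω} ≤ C * γ ^ n := by
  have hρ1' : 0 < 1 - ρ := sub_pos.2 hρ1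
  obtain ⟨t', hbt', ht't⟩ : ∃ t', b < (1 - ρ) * t' ∧ t' < t := by
    obtain ⟨t', h1, h2⟩ := exists_between ((div_lt_iff₀' hρ1').2 ht)
    exact ⟨t', (div_lt_iff₀' hρ1').1 h1, h2⟩
  have ht' : 0 < t' := pos_of_mul_pos_right (hb.trans_lt hbt') hρ1'.le
  obtain ⟨θ, hθ, hθb⟩ := exists_pos_exp_sub_one_mul_lt hb ht' hbt'
  set β := exp (θ * t') with hβ
  have hexpθ : 0 < exp θ - 1 := sub_pos.2 (one_lt_exp_iff.2 hθ)
  have hβ1 : 0 < β - 1 := sub_pos.2 (one_lt_exp_iff.2 (mul_pos hθ ht'))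
  have hβρ : 0 < β - ρ * exp θ :=
    pos_of_mul_pos_left ((by positivity : (0 : ℝ) ≤ _).trans_lt hθb) hβ1.le
  -- `α` solves `exp θ * (1 + α) = β / ρ + α`, which turns `hθb` into `hb'`.
  set α := (β - ρ * exp θ) / (ρ * (exp θ - 1)) with hα
  have hα0 : 0 < α := by positivity
  have hσ : exp θ * (1 + α) = β / ρ + α := by
    rw [hα]; field_simp; ring
  have hb' : β / ρ * b + α ≤ β * α := by
    have key : β * α - (β / ρ * b + α) =
        ((β - ρ * exp θ) * (β - 1) - (exp θ - 1) * β * b) / (ρ * (exp θ - 1)) := by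
      rw [hα]; field_simp; ring
    have : 0 ≤ β * α - (β / ρ * b + α) := key ▸ div_nonneg (by linarith) (by positivity)
    linarith
  refine ⟨(∫ ω, (V 0 ω + α) ∂μ) / α, β * exp (-(θ * t)), by positivity, ?_, fun n =>
    hV.measureReal_occupationTime_ge_le hθ.le hα0 hσ.le (div_mul_cancel₀ β hρ0.ne').le hb'
      (exp_pos _).le t n⟩
  rw [hβ, ← exp_add, exp_lt_one_iff]
  nlinarith

end Tilted

section BoundedIncrements

variable {Ω : Type*} {m0 : MeasurableSpace Ω} {μ : Measure Ω} {X : ℕ → Ω → ℝ}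

theorem ae_le_add_mul_of_abs_sub_le {x0 k : ℝ} (hX0 : ∀ᵐ ω ∂μ, X 0 ω = x0)
    (hbdd : ∀ n : ℕ, ∀ᵐ ω ∂μ, |X (n + 1) ω - X n ω| ≤ k) (n : ℕ) :
    ∀ᵐ ω ∂μ, X n ω ≤ x0 + n * k := by
  induction n with
  | zero => filter_upwards [hX0] with ω h; simp [h]
  | succ n ih =>
    filter_upwards [ih, hbdd n] with ω h1 h2
    push_cast
    linarith [le_of_abs_le h2]

theorem sum_ite_lt_add_occupationTime_exp {η : ℝ} (hη : 0 < η) (M : ℝ) (n : ℕ) (ω : Ω) :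
    ∑ j ∈ Finset.Icc 1 n, (if X j ω < M then (1 : ℝ) else 0) +
      occupationTime (fun j ω => exp (η * (X j ω - M))) n ω = n := by
  rw [occupationTime, ← Finset.sum_add_distrib]
  calc ∑ j ∈ Finset.Icc 1 n, ((if X j ω < M then (1 : ℝ) else 0) +
        if 1 ≤ exp (η * (X j ω - M)) then 1 else 0)
      = ∑ _j ∈ Finset.Icc 1 n, (1 : ℝ) := by
        refine Finset.sum_congr rfl fun j _ => ?_
        simp only [one_le_exp_iff, mul_nonneg_iff_of_pos_left hη, sub_nonneg]
        split_ifs <;> norm_num <;> linarith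
    _ = n := by simp

variable [IsFiniteMeasure μ] {ℱ : Filtration ℕ m0} {x0 k ε K η ρ : ℝ}

theorem geometricDrift_exp_of_bounded_increments (hadp : Adapted ℱ X)
    (hX0 : ∀ᵐ ω ∂μ, X 0 ω = x0) (hbdd : ∀ n : ℕ, ∀ᵐ ω ∂μ, |X (n + 1) ω - X n ω| ≤ k)
    (hdrift : ∀ n : ℕ, ∀ᵐ ω ∂μ, K ≤ X n ω →
      (μ[(fun ω' => X (n + 1) ω' - X n ω') | ℱ n]) ω ≤ -ε)
    (hη : 0 ≤ η) (hρ0 : 0 ≤ ρ) (hρ : 1 - η * ε + (exp (η * k) - 1 - η * k) ≤ ρ) (M : ℝ) :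
    GeometricDrift ℱ μ (fun n ω => exp (η * (X n ω - M))) ρ (exp (η * (K - M + k))) := by
  have hmeas (n : ℕ) : Measurable[ℱ n] fun ω => exp (η * (X n ω - M)) := by
    have := hadp n
    fun_prop
  have hint (n : ℕ) : Integrable (fun ω => exp (η * (X n ω - M))) μ := by
    refine .of_bound ((hmeas n).mono (ℱ.le n) le_rfl).aestronglyMeasurable
      (exp (η * (x0 + n * k - M))) ?_
    filter_upwards [ae_le_add_mul_of_abs_sub_le hX0 hbdd n] with ω h
    rw [norm_of_nonneg (exp_pos _).le]
    gcongr
  refine ⟨hmeas, fun n ω => (exp_pos _).le, hint, fun n => ?_⟩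
  have hX (j : ℕ) : Measurable (X j) := (hadp j).mono (ℱ.le j) le_rfl
  have h := condExp_exp_add_le (ℱ.le n) (Z := fun ω => X n ω - M)
    (Δ := fun ω => X (n + 1) ω - X n ω) (K := K - M) ((hadp n).sub_const M).stronglyMeasurable
    ((hX (n + 1)).sub (hX n)).aestronglyMeasurable (hbdd n)
    (by filter_upwards [hdrift n] with ω h hK using h (by linarith))
    (by simpa only [sub_add_sub_cancel'] using hint (n + 1)) hη hρ0 hρ
  simpa only [sub_add_sub_cancel'] using h

end BoundedIncrements

theorem stmt_7_general
    {Ω : Type*} {m0 : MeasurableSpace Ω} {μ : Measure Ω} [IsProbabilityMeasure μ]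
    (ℱ : Filtration ℕ m0) (X : ℕ → Ω → ℝ) (hadp : Adapted ℱ X)
    (x0 : ℝ) (hX0 : ∀ᵐ ω ∂μ, X 0 ω = x0)
    (k ε K : ℝ) (hε0 : 0 < ε) (hεk : ε ≤ k)
    (hbdd : ∀ n : ℕ, ∀ᵐ ω ∂μ, |X (n + 1) ω - X n ω| ≤ k)
    (hdrift : ∀ n : ℕ, ∀ᵐ ω ∂μ, K ≤ X n ω →
      (μ[(fun ω' => X (n + 1) ω' - X n ω') | ℱ n]) ω ≤ -ε)
    (lam : ℝ)
    (c η ρ D : ℝ)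
    (hc : c = (Real.exp (lam * k) - 1 - lam * k) / lam ^ 2)
    (hη0 : 0 < η) (hηlt : η < min lam (ε / (2 * c)))
    (hρ : ρ = 1 - η * ε / 2)
    (hD : D = Real.exp (lam * k))
    (M p₀ : ℝ) (hp₀ : p₀ = 1 - D * Real.exp (η * (K - M)) / (1 - ρ))
    (hp₀pos : 0 < p₀) :
    ∀ ε' : ℝ, 0 < ε' →
      ∃ C : ℝ, ∃ γ : ℝ, 0 < γ ∧ γ < 1 ∧
        ∀ n : ℕ, 1 ≤ n →
          (μ {ω | (1 / (n : ℝ)) * ∑ j ∈ Finset.Icc 1 n, (if X j ω < M then (1 : ℝ) else 0) ≤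
              p₀ * (1 - ε')}).toReal ≤ C * γ ^ n := by
  intro ε' hε'
  have hk : 0 < k := hε0.trans_le hεk
  have hηlam : η < lam := hηlt.trans_le (min_le_left _ _)
  have hηc : η < ε / (2 * c) := hηlt.trans_le (min_le_right _ _)
  have hρ1 : 0 < 1 - ρ := by rw [hρ]; nlinarith
  have hρ0 : 0 < ρ := by
    rw [hρ]; linarith [mul_lt_one_of_lt_div_two_mul hε0 hεk (hη0.trans hηlam) hc hηc]
  have hV := geometricDrift_exp_of_bounded_increments (μ := μ) hadp hX0 hbdd hdrift hη0.le
    hρ0.le (by linarith [exp_mul_sub_one_sub_le_half_mul hk.le hη0 hηlam hc hηc]) M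
  have hb : exp (η * (K - M + k)) ≤ (1 - ρ) * (1 - p₀) := by
    rw [hp₀, sub_sub_cancel, mul_div_cancel₀ _ hρ1.ne', mul_add, exp_add, mul_comm D, hD]
    gcongr
  obtain ⟨C, γ, hγ0, hγ1, hC⟩ := hV.exists_measureReal_occupationTime_ge_le hρ0 (by linarith)
    (exp_pos _).le (t := 1 - p₀ * (1 - ε')) (by nlinarith [mul_pos (mul_pos hρ1 hp₀pos) hε'])
  refine ⟨C, γ, hγ0, hγ1, fun n hn => (measureReal_mono ?_).trans (hC n)⟩
  refine Set.ofPred_subset_ofPred.2 fun ω hω => ?_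
  have hn : (0 : ℝ) < n := by exact_mod_cast hn
  have := sum_ite_lt_add_occupationTime_exp (X := X) hη0 M n ω
  rw [one_div, inv_mul_le_iff₀ hn] at hω
  linarith

theorem stmt_7
    {Ω : Type*} {m0 : MeasurableSpace Ω} {μ : Measure Ω} [IsProbabilityMeasure μ]
    (ℱ : Filtration ℕ m0) (X : ℕ → Ω → ℝ) (hadp : Adapted ℱ X)
    (x0 : ℝ) (hX0 : ∀ᵐ ω ∂μ, X 0 ω = x0)
    (k ε K : ℝ) (hk : 0 < k) (hε0 : 0 < ε) (hεk : ε ≤ k)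
    (hbdd : ∀ n : ℕ, ∀ᵐ ω ∂μ, |X (n + 1) ω - X n ω| ≤ k)
    (hdrift : ∀ n : ℕ, ∀ᵐ ω ∂μ, K ≤ X n ω →
      (μ[(fun ω' => X (n + 1) ω' - X n ω') | ℱ n]) ω ≤ -ε)
    (lam : ℝ) (hlam : 0 < lam)
    (c η ρ D : ℝ)
    (hc : c = (Real.exp (lam * k) - 1 - lam * k) / lam ^ 2)
    (hη0 : 0 < η) (hηlt : η < min lam (ε / (2 * c)))
    (hρ : ρ = 1 - η * ε / 2)
    (hD : D = Real.exp (lam * k))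
    (M p₀ : ℝ) (hp₀ : p₀ = 1 - D * Real.exp (η * (K - M)) / (1 - ρ))
    (hp₀pos : 0 < p₀) :
    ∀ ε' : ℝ, 0 < ε' →
      ∃ C : ℝ, ∃ γ : ℝ, 0 < γ ∧ γ < 1 ∧
        ∀ n : ℕ, 1 ≤ n →
          (μ {ω | (1 / (n : ℝ)) * ∑ j ∈ Finset.Icc 1 n, (if X j ω < M then (1 : ℝ) else 0) ≤
              p₀ * (1 - ε')}).toReal ≤ C * γ ^ n :=
  stmt_7_general ℱ X hadp x0 hX0 k ε K hε0 hεk hbdd hdrift lam c η ρ D hc hη0 hηlt hρ hD M p₀ hp₀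
    hp₀pos
end
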